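/- Let G_pq ∈ ℂ^{d×d}, G_pw ∈ ℂ^{d×m}, G_zq ∈ ℂ^{l×d}, G_zw ∈ ℂ^{l×m}, Γ ∈ ℂ^{m×l} with I - Γ G_zw invertible, Π ∈ ℂ^{2d×2d} Hermitian, and Ḡ = G_pq + G_pw (I - Γ G_zw)^{-1} Γ G_zq. If [Ḡ; I]* Π [Ḡ; I] ⪯ -ε I for some ε > 0, then there exist a scalar x > 0 and ε' > 0 such that with X = x I, [G_pq G_pw; I 0]* Π [G_pq G_pw; I 0] - [-G_zq* Γ*; I - G_zw* Γ*] X [-Γ G_zq, I - Γ G_zw] ⪯ -ε' I. -/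

import Mathlib

open Matrix ComplexOrder


lemma aux_smul_psd {n : Type*} [Fintype n] {M : Matrix n n ℂ} (hM : M.PosSemidef)
    {r : ℝ} (hr : 0 ≤ r) : (((r : ℂ)) • M).PosSemidef := by
  refine posSemidef_iff_dotProduct_mulVec.mpr ⟨?_, ?_⟩
  · have : star ((r:ℂ)) = ((r:ℂ)) := by simp [Complex.conj_ofReal]
    rw [Matrix.IsHermitian, conjTranspose_smul, hM.1.eq, this]
  · intro x
    rw [smul_mulVec, dotProduct_smul, smul_eq_mul]
    exact mul_nonneg (Complex.zero_le_real.2 hr) (hM.dotProduct_mulVec_nonneg x)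

lemma aux_exists_bound {n : Type*} [Fintype n] [DecidableEq n]
    {H : Matrix n n ℂ} (hH : H.IsHermitian) :
    ∃ c : ℝ, 0 < c ∧ (((c : ℂ)) • (1 : Matrix n n ℂ) - H).PosSemidef := by
  classical
  refine ⟨1 + ∑ i, |hH.eigenvalues i|, by positivity, ?_⟩
  set c : ℝ := 1 + ∑ i, |hH.eigenvalues i| with hc
  have hle : ∀ i, hH.eigenvalues i ≤ c := by
    intro i
    have h1 : hH.eigenvalues i ≤ |hH.eigenvalues i| := le_abs_self _
    have h2 : |hH.eigenvalues i| ≤ ∑ j, |hH.eigenvalues j| :=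
      Finset.single_le_sum (f := fun j => |hH.eigenvalues j|)
        (fun j _ => abs_nonneg _) (Finset.mem_univ i)
    simp only [hc]; linarith
  have hkey : ((c : ℂ)) • (1 : Matrix n n ℂ) - H =
      (hH.eigenvectorUnitary : Matrix n n ℂ) *
        diagonal (fun i => ((c - hH.eigenvalues i : ℝ) : ℂ)) *
        (star (hH.eigenvectorUnitary : Matrix n n ℂ)) := by
    have hdiag : diagonal (fun i => ((c - hH.eigenvalues i : ℝ) : ℂ)) =
        ((c : ℂ)) • (1 : Matrix n n ℂ) - diagonal (Complex.ofReal ∘ hH.eigenvalues) := by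
      rw [smul_one_eq_diagonal, diagonal_sub]
      congr 1
      funext i
      push_cast
      simp
    rw [hdiag, Matrix.mul_sub, Matrix.sub_mul, Matrix.mul_smul, Matrix.mul_one,
      Matrix.smul_mul]
    have hU : (hH.eigenvectorUnitary : Matrix n n ℂ) *
        (star (hH.eigenvectorUnitary : Matrix n n ℂ)) = 1 :=
      (Matrix.mem_unitaryGroup_iff).mp hH.eigenvectorUnitary.2
    rw [hU]
    congr 1
    exact hH.spectral_theorem
  rw [hkey, Matrix.star_eq_conjTranspose]
  refine Matrix.PosSemidef.mul_mul_conjTranspose_same ?_ _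
  refine Matrix.PosSemidef.diagonal ?_
  intro i
  exact Complex.zero_le_real.2 (by linarith [hle i])

lemma aux_two_smul {a b : Type*} [Fintype a] [Fintype b] (X Y : Matrix a b ℂ) :
    ((2 : ℂ) • (X * Xᴴ) + (2 : ℂ) • (Y * Yᴴ) - (X + Y) * (X + Y)ᴴ).PosSemidef := by
  have h : (2 : ℂ) • (X * Xᴴ) + (2 : ℂ) • (Y * Yᴴ) - (X + Y) * (X + Y)ᴴ
      = (X - Y) * (X - Y)ᴴ := by
    simp only [conjTranspose_add, conjTranspose_sub, Matrix.add_mul, Matrix.mul_add,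
      Matrix.sub_mul, Matrix.mul_sub, two_smul]
    abel
  rw [h]
  exact posSemidef_self_mul_conjTranspose _

lemma aux_block_diag_psd {a b : Type*} [Fintype a] [Fintype b] [DecidableEq a] [DecidableEq b]
    {M : Matrix a a ℂ} {K : Matrix b b ℂ} (hM : M.PosSemidef) (hK : K.PosSemidef) :
    (fromBlocks M 0 0 K).PosSemidef := by
  refine posSemidef_iff_dotProduct_mulVec.mpr ⟨?_, ?_⟩
  · rw [Matrix.IsHermitian, fromBlocks_conjTranspose, hM.1.eq, hK.1.eq]
    simp
  · intro x
    have hx : star x ⬝ᵥ ((fromBlocks M 0 0 K) *ᵥ x) =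
        star (x ∘ Sum.inl) ⬝ᵥ (M *ᵥ (x ∘ Sum.inl)) +
        star (x ∘ Sum.inr) ⬝ᵥ (K *ᵥ (x ∘ Sum.inr)) := by
      simp [fromBlocks_mulVec, dotProduct, Fintype.sum_sum_type, Function.comp]
    rw [hx]
    exact add_nonneg (hM.dotProduct_mulVec_nonneg _) (hK.dotProduct_mulVec_nonneg _)


lemma aux_block_psd {a b : Type*} [Fintype a] [Fintype b] [DecidableEq a] [DecidableEq b]
    (P : Matrix a a ℂ) (Q : Matrix a b ℂ) (Rm : Matrix b b ℂ) (t : ℝ) (ht : 0 < t)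
    (h1 : (P - ((t⁻¹ : ℝ) : ℂ) • (Q * Qᴴ)).PosSemidef)
    (h2 : (Rm - ((t : ℝ) : ℂ) • 1).PosSemidef) :
    (fromBlocks P Q Qᴴ Rm).PosSemidef := by
  set W : Matrix b (a ⊕ b) ℂ :=
    fromCols (((Real.sqrt t⁻¹ : ℝ) : ℂ) • Qᴴ) (((Real.sqrt t : ℝ) : ℂ) • 1) with hW
  have hsq1 : ((Real.sqrt t⁻¹ : ℝ) : ℂ) * ((Real.sqrt t⁻¹ : ℝ) : ℂ) = ((t⁻¹ : ℝ) : ℂ) := by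
    rw [← Complex.ofReal_mul, Real.mul_self_sqrt (inv_nonneg.2 ht.le)]
  have hsq2 : ((Real.sqrt t : ℝ) : ℂ) * ((Real.sqrt t : ℝ) : ℂ) = ((t : ℝ) : ℂ) := by
    rw [← Complex.ofReal_mul, Real.mul_self_sqrt ht.le]
  have hsq3 : ((Real.sqrt t⁻¹ : ℝ) : ℂ) * ((Real.sqrt t : ℝ) : ℂ) = 1 := by
    rw [← Complex.ofReal_mul, Real.sqrt_inv,
      inv_mul_cancel₀ (by positivity : Real.sqrt t ≠ 0)]
    simp
  have hWHW : Wᴴ * W = fromBlocks (((t⁻¹ : ℝ) : ℂ) • (Q * Qᴴ)) Q Qᴴ (((t : ℝ) : ℂ) • 1) := by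
    rw [hW, conjTranspose_fromCols_eq_fromRows_conjTranspose, fromRows_mul_fromCols]
    simp only [conjTranspose_smul, conjTranspose_conjTranspose, conjTranspose_one,
      Matrix.smul_mul, Matrix.mul_smul, smul_smul, Matrix.mul_one, Matrix.one_mul,
      Complex.star_def, Complex.conj_ofReal]
    rw [hsq1, hsq2, hsq3, mul_comm (((Real.sqrt t : ℝ) : ℂ)) _, hsq3]
    simp
  have hkey : fromBlocks P Q Qᴴ Rm =
      fromBlocks (P - ((t⁻¹ : ℝ) : ℂ) • (Q * Qᴴ)) 0 0 (Rm - ((t : ℝ) : ℂ) • 1) + Wᴴ * W := by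
    rw [hWHW, fromBlocks_add, fromBlocks_inj]
    refine ⟨by module, by module, by module, by module⟩
  rw [hkey]
  exact (aux_block_diag_psd h1 h2).add (posSemidef_conjTranspose_mul_self W)

theorem stmt_3 (d l m : ℕ)
    (Gpq : Matrix (Fin d) (Fin d) ℂ) (Gpw : Matrix (Fin d) (Fin m) ℂ)
    (Gzq : Matrix (Fin l) (Fin d) ℂ) (Gzw : Matrix (Fin l) (Fin m) ℂ)
    (Γ : Matrix (Fin m) (Fin l) ℂ)
    (hinv : IsUnit (1 - Γ * Gzw))
    (Pi0 : Matrix (Fin d ⊕ Fin d) (Fin d ⊕ Fin d) ℂ) (hPi : Pi0.IsHermitian)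
    (T : Matrix (Fin d ⊕ Fin d) (Fin d ⊕ Fin m) ℂ)
    (hT : T = fromBlocks Gpq Gpw (1 : Matrix (Fin d) (Fin d) ℂ) (0 : Matrix (Fin d) (Fin m) ℂ))
    (R : Matrix (Fin m) (Fin d ⊕ Fin m) ℂ)
    (hR : R = fromCols (-(Γ * Gzq)) (1 - Γ * Gzw))
    (Gbar : Matrix (Fin d) (Fin d) ℂ)
    (hGbar : Gbar = Gpq + Gpw * (1 - Γ * Gzw)⁻¹ * Γ * Gzq)
    (ε : ℝ) (hε : 0 < ε)
    (hlumped :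
      ((-(ε : ℂ)) • (1 : Matrix (Fin d) (Fin d) ℂ) -
        ((fromRows Gbar (1 : Matrix (Fin d) (Fin d) ℂ))ᴴ * Pi0 *
          fromRows Gbar (1 : Matrix (Fin d) (Fin d) ℂ))).PosSemidef) :
    ∃ x : ℝ, 0 < x ∧ ∃ ε' : ℝ, 0 < ε' ∧
      ((-(ε' : ℂ)) • (1 : Matrix (Fin d ⊕ Fin m) (Fin d ⊕ Fin m) ℂ) -
        (Tᴴ * Pi0 * T - Rᴴ * ((x : ℂ) • (1 : Matrix (Fin m) (Fin m) ℂ)) * R)).PosSemidef := by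
  classical
  set N : Matrix (Fin m) (Fin m) ℂ := 1 - Γ * Gzw with hNdef
  have hNdet : IsUnit N.det := (Matrix.isUnit_iff_isUnit_det _).mp hinv
  have hN1 : N * N⁻¹ = 1 := mul_nonsing_inv N hNdet
  have hN2 : N⁻¹ * N = 1 := nonsing_inv_mul N hNdet
  clear_value N
  set S : Matrix (Fin m) (Fin d) ℂ := N⁻¹ * (Γ * Gzq) with hSdef
  set L : Matrix (Fin d ⊕ Fin d) (Fin d) ℂ :=
    fromRows Gbar (1 : Matrix (Fin d) (Fin d) ℂ) with hLdef
  set B : Matrix (Fin d ⊕ Fin d) (Fin m) ℂ :=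
    fromRows Gpw (0 : Matrix (Fin d) (Fin m) ℂ) with hBdef
  set V : Matrix (Fin d ⊕ Fin m) (Fin d ⊕ Fin m) ℂ := fromBlocks 1 0 S 1 with hVdef
  set V' : Matrix (Fin d ⊕ Fin m) (Fin d ⊕ Fin m) ℂ := fromBlocks 1 0 (-S) 1 with hV'def
  clear_value S L B V V'
  obtain ⟨cS, hcS, hcSpsd⟩ := aux_exists_bound (posSemidef_conjTranspose_mul_self S).1
  obtain ⟨cY, hcY, hcYpsd⟩ :=
    aux_exists_bound (posSemidef_self_mul_conjTranspose (Lᴴ * Pi0 * B)).1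
  obtain ⟨cB, hcB, hcBpsd⟩ := aux_exists_bound (isHermitian_conjTranspose_mul_mul B hPi)
  obtain ⟨c5, hc5, hc5psd⟩ := aux_exists_bound (posSemidef_conjTranspose_mul_self (N⁻¹)).1
  set ε' : ℝ := ε / (2 * (1 + cS)) with hε'def
  have hε' : 0 < ε' := by positivity
  set t : ℝ := (2 * ε' ^ 2 * cS + 2 * cY + 1) * (2 / ε) with htdef
  have ht : 0 < t := by positivity
  set s : ℝ := ε - ε' - ε' * cS - (2 * ε' ^ 2 * cS + 2 * cY) / t with hsdef
  have hcS1 : (1 : ℝ) + cS ≠ 0 := by positivity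
  have h1 : ε' + ε' * cS = ε / 2 := by rw [hε'def]; field_simp
  have hAt : ε / 2 * t = 2 * ε' ^ 2 * cS + 2 * cY + 1 := by
    rw [htdef]; field_simp
  have h2 : (2 * ε' ^ 2 * cS + 2 * cY) / t ≤ ε / 2 := by
    rw [div_le_iff₀ ht]; nlinarith
  have hs : 0 ≤ s := by rw [hsdef]; linarith [h1, h2]
  set x : ℝ := c5 * (t + ε' + cB) with hxdef
  have hx : 0 < x := by positivity
  refine ⟨x, hx, ε', hε', ?_⟩
  set P : Matrix (Fin d) (Fin d) ℂ :=
    (-(ε' : ℂ)) • (1 + Sᴴ * S) - Lᴴ * Pi0 * L with hPdef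
  set Q : Matrix (Fin d) (Fin m) ℂ := (-(ε' : ℂ)) • Sᴴ - Lᴴ * Pi0 * B with hQdef
  set Rm : Matrix (Fin m) (Fin m) ℂ :=
    ((x : ℝ) : ℂ) • (Nᴴ * N) - ((ε' : ℝ) : ℂ) • 1 - Bᴴ * Pi0 * B with hRmdef
  clear_value P Q Rm
  have hTV : T * V = fromCols L B := by
    rw [hT, hVdef, fromBlocks_multiply, hLdef, hBdef,
      fromCols_fromRows_eq_fromBlocks, fromBlocks_inj]
    refine ⟨?_, by simp, by simp, by simp⟩
    rw [hGbar, hSdef]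
    simp [Matrix.mul_assoc]
  have hRV : R * V = fromCols 0 N := by
    rw [hR, hVdef, fromCols_mul_fromBlocks]
    have e1 : -(Γ * Gzq) * (1 : Matrix (Fin d) (Fin d) ℂ) + N * S = 0 := by
      rw [hSdef, Matrix.mul_one, ← Matrix.mul_assoc, hN1, Matrix.one_mul]
      exact neg_add_cancel _
    have e2 : -(Γ * Gzq) * (0 : Matrix (Fin d) (Fin m) ℂ) +
        N * (1 : Matrix (Fin m) (Fin m) ℂ) = N := by simp
    rw [e1, e2]
  have hVHV : Vᴴ * V = fromBlocks (1 + Sᴴ * S) Sᴴ S 1 := by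
    rw [hVdef, fromBlocks_conjTranspose, fromBlocks_multiply]
    simp
  have hexp : Vᴴ * ((-(ε' : ℂ)) • (1 : Matrix (Fin d ⊕ Fin m) (Fin d ⊕ Fin m) ℂ) -
        (Tᴴ * Pi0 * T - Rᴴ * (((x : ℝ) : ℂ) • (1 : Matrix (Fin m) (Fin m) ℂ)) * R)) * V
      = (-(ε' : ℂ)) • (Vᴴ * V) - (T * V)ᴴ * Pi0 * (T * V)
        + ((x : ℝ) : ℂ) • ((R * V)ᴴ * (R * V)) := by
    simp only [conjTranspose_mul, Matrix.mul_sub, Matrix.sub_mul, Matrix.mul_smul,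
      Matrix.smul_mul, Matrix.mul_one, Matrix.one_mul, Matrix.mul_assoc]
    abel
  have hQ2 : Qᴴ = (-(ε' : ℂ)) • S - Bᴴ * Pi0 * L := by
    rw [hQdef, conjTranspose_sub, conjTranspose_smul, conjTranspose_conjTranspose,
      conjTranspose_mul, conjTranspose_mul, conjTranspose_conjTranspose, hPi.eq,
      ← Matrix.mul_assoc]
    congr 1
    simp [star_neg, Complex.star_def, Complex.conj_ofReal]
  have hY : Vᴴ * ((-(ε' : ℂ)) • (1 : Matrix (Fin d ⊕ Fin m) (Fin d ⊕ Fin m) ℂ) -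
        (Tᴴ * Pi0 * T - Rᴴ * (((x : ℝ) : ℂ) • (1 : Matrix (Fin m) (Fin m) ℂ)) * R)) * V
      = fromBlocks P Q Qᴴ Rm := by
    rw [hexp, hTV, hRV, hVHV,
      conjTranspose_fromCols_eq_fromRows_conjTranspose, fromRows_mul,
      fromRows_mul_fromCols,
      conjTranspose_fromCols_eq_fromRows_conjTranspose, fromRows_mul_fromCols]
    simp only [conjTranspose_zero, Matrix.mul_zero, Matrix.zero_mul]
    rw [fromBlocks_smul, fromBlocks_smul, sub_eq_add_neg, fromBlocks_neg,
      fromBlocks_add, fromBlocks_add, fromBlocks_inj]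
    exact ⟨by rw [hPdef]; module, by rw [hQdef]; module,
      by rw [hQ2]; module, by rw [hRmdef]; module⟩
  have hXe : ((-(ε' : ℂ)) • Sᴴ) * ((-(ε' : ℂ)) • Sᴴ)ᴴ
      = (((ε' ^ 2 : ℝ)) : ℂ) • (Sᴴ * S) := by
    rw [conjTranspose_smul, conjTranspose_conjTranspose, Matrix.smul_mul, Matrix.mul_smul,
      smul_smul]
    congr 1
    simp only [star_neg, Complex.star_def, Complex.conj_ofReal]
    push_cast
    ring
  have e2 : (-(Lᴴ * Pi0 * B)) * (-(Lᴴ * Pi0 * B))ᴴ = (Lᴴ * Pi0 * B) * (Lᴴ * Pi0 * B)ᴴ := by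
    rw [conjTranspose_neg, Matrix.neg_mul, Matrix.mul_neg, neg_neg]
  have e3 : (-(ε' : ℂ)) • Sᴴ + -(Lᴴ * Pi0 * B) = Q := by rw [hQdef]; module
  have h2s : ((2 : ℂ) • ((((ε' ^ 2 : ℝ)) : ℂ) • (Sᴴ * S))
      + (2 : ℂ) • ((Lᴴ * Pi0 * B) * (Lᴴ * Pi0 * B)ᴴ) - Q * Qᴴ).PosSemidef := by
    have h0 := aux_two_smul ((-(ε' : ℂ)) • Sᴴ) (-(Lᴴ * Pi0 * B))
    rw [hXe, e2, e3] at h0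
    exact h0
  have hP : (P - ((t⁻¹ : ℝ) : ℂ) • (Q * Qᴴ)).PosSemidef := by
    have hb := ((((hlumped.add (aux_smul_psd h2s (inv_nonneg.2 ht.le))).add
        (aux_smul_psd hcSpsd hε'.le)).add
        (aux_smul_psd hcSpsd (by positivity : (0:ℝ) ≤ 2 * ε' ^ 2 / t))).add
        (aux_smul_psd hcYpsd (by positivity : (0:ℝ) ≤ 2 / t))).add
        (aux_smul_psd (Matrix.PosSemidef.one (n := Fin d) (R := ℂ)) hs)
    have heq : P - ((t⁻¹ : ℝ) : ℂ) • (Q * Qᴴ) =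
        ((-(ε : ℂ)) • 1 - Lᴴ * Pi0 * L)
        + ((t⁻¹ : ℝ) : ℂ) • ((2 : ℂ) • ((((ε' ^ 2 : ℝ)) : ℂ) • (Sᴴ * S))
            + (2 : ℂ) • ((Lᴴ * Pi0 * B) * (Lᴴ * Pi0 * B)ᴴ) - Q * Qᴴ)
        + ((ε' : ℝ) : ℂ) • (((cS : ℝ) : ℂ) • 1 - Sᴴ * S)
        + (((2 * ε' ^ 2 / t : ℝ)) : ℂ) • (((cS : ℝ) : ℂ) • 1 - Sᴴ * S)
        + (((2 / t : ℝ)) : ℂ) • (((cY : ℝ) : ℂ) • 1 - (Lᴴ * Pi0 * B) * (Lᴴ * Pi0 * B)ᴴ)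
        + ((s : ℝ) : ℂ) • 1 := by
      rw [hPdef, hsdef]
      match_scalars <;> push_cast <;> ring
    rw [heq]
    exact hb
  have hNid : Nᴴ * (((c5 : ℝ) : ℂ) • 1 - (N⁻¹)ᴴ * N⁻¹) * N
      = ((c5 : ℝ) : ℂ) • (Nᴴ * N) - 1 := by
    have hmid : Nᴴ * ((N⁻¹)ᴴ * N⁻¹) * N = 1 := by
      have hh : Nᴴ * ((N⁻¹)ᴴ * N⁻¹) * N = (N⁻¹ * N)ᴴ * (N⁻¹ * N) := by
        rw [conjTranspose_mul]
        simp [Matrix.mul_assoc]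
      rw [hh, hN2]
      simp
    rw [Matrix.mul_sub, Matrix.sub_mul, Matrix.mul_smul, Matrix.mul_one, Matrix.smul_mul,
      hmid]
  have hRm : (Rm - ((t : ℝ) : ℂ) • 1).PosSemidef := by
    have hpsd1 := aux_smul_psd (hc5psd.conjTranspose_mul_mul_same N)
      (by positivity : (0:ℝ) ≤ t + ε' + cB)
    have heq2 : Rm - ((t : ℝ) : ℂ) • 1 =
        (((t + ε' + cB : ℝ)) : ℂ) • (Nᴴ * (((c5 : ℝ) : ℂ) • 1 - (N⁻¹)ᴴ * N⁻¹) * N)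
          + (((cB : ℝ) : ℂ) • 1 - Bᴴ * Pi0 * B) := by
      rw [hNid, hRmdef, hxdef]
      match_scalars <;> push_cast <;> ring
    rw [heq2]
    exact hpsd1.add hcBpsd
  have hfb : (fromBlocks P Q Qᴴ Rm).PosSemidef := aux_block_psd P Q Rm t ht hP hRm
  have hVV' : V * V' = 1 := by
    rw [hVdef, hV'def, fromBlocks_multiply]
    simp
  have hconj : ∀ Z : Matrix (Fin d ⊕ Fin m) (Fin d ⊕ Fin m) ℂ,
      Z = V'ᴴ * (Vᴴ * Z * V) * V' := by
    intro Z
    calc Z = 1ᴴ * Z * 1 := by simp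
    _ = (V * V')ᴴ * Z * (V * V') := by rw [hVV']
    _ = V'ᴴ * (Vᴴ * Z * V) * V' := by
        rw [conjTranspose_mul]
        simp only [Matrix.mul_assoc]
  have h5 := hfb.conjTranspose_mul_mul_same V'
  rw [← hY] at h5
  rw [← hconj _] at h5
  exact h5
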